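/- arXiv:1407.8353 — 2 statements merged into one kernel-verified Lean document; each statement's English description precedes it below -/
import Mathlib

section
/- (Coupling Lemma for transition probabilities.) Let (E, 𝓔) be a countably generated measurable space and let P(x, dy) be a Markov kernel on (E, 𝓔). Then there exists a Markov kernel Q((x₁,x₂), dy₁dy₂) on (E × E, 𝓔 ⊗ 𝓔) such that for every (x₁, x₂) ∈ E × E: (i) Q((x₁,x₂), Δ) = 1 − (1/2)‖P(x₁,·) − P(x₂,·)‖, where Δ is the diagonal of E × E; and (ii) the restriction of the measure Q((x₁,x₂), ·) to (E × E) \ Δ is absolutely continuous with respect to the product measure P(x₁, dy₁) ⊗ P(x₂, dy₂). -/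
open MeasureTheory ProbabilityTheory Filter ENNReal

/-- The total variation distance `‖μ - ν‖` between two (probability) measures,
with values in `[0,2]`: `‖μ - ν‖ = 2 ⨆_{A measurable} |μ A - ν A|`. -/
noncomputable def tvDist {E : Type*} [MeasurableSpace E] (μ ν : Measure E) : ℝ≥0∞ :=
  2 * ⨆ (A : Set E) (_ : MeasurableSet A), ((μ A - ν A) ⊔ (ν A - μ A))

/-- The `n`-step transition kernel `P_n` of a Markov kernel `P`. -/
noncomputable def nStep {E : Type*} [MeasurableSpace E] (P : ProbabilityTheory.Kernel E E) :
    ℕ → ProbabilityTheory.Kernel E E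
  | 0 => ProbabilityTheory.Kernel.id
  | n + 1 => (nStep P n) ∘ₖ P

/-!
Split `P(x₁,·) = m + ψ` and `P(x₂,·) = m + φ`, where `m = P(x₁,·) ⊓ P(x₂,·)` is the common part,
obtained measurably in `(x₁, x₂)` from the kernel Radon–Nikodym derivative. The excesses `ψ`, `φ`
are mutually singular and have the same mass `1 - m(E)`, so the total variation is `2 (1 - m(E))`.
The coupling puts `m` on the diagonal, via `y ↦ (y, y)`, and the normalised product
`ψ ⊗ φ / (1 - m(E))` off it; mutual singularity makes the latter vanish on the diagonal, and it is
dominated by `P(x₁,·) ⊗ P(x₂,·)`.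
-/

namespace MeasureTheory.Measure

variable {γ : Type*} [MeasurableSpace γ]

lemma MutuallySingular.prod_diagonal_eq_zero {μ ν : Measure γ} [SFinite ν] (h : μ ⟂ₘ ν) :
    μ.prod ν {p | p.1 = p.2} = 0 := by
  obtain ⟨T, -, hμT, hνT⟩ := h
  refine measure_mono_null (t := T ×ˢ Set.univ ∪ Set.univ ×ˢ Tᶜ) (fun p hp => ?_)
    (measure_union_null ?_ ?_)
  · by_cases h : p.1 ∈ T
    · exact Or.inl ⟨h, trivial⟩
    · exact Or.inr ⟨trivial, (hp : p.1 = p.2) ▸ h⟩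
  · rw [prod_prod, hμT, zero_mul]
  · rw [prod_prod, hνT, mul_zero]

lemma withDensity_mutuallySingular_of_disjoint_support {μ : Measure γ} {f g : γ → ℝ≥0∞}
    (hf : AEMeasurable f μ) (hg : AEMeasurable g μ)
    (hfg : Disjoint (Function.support f) (Function.support g)) :
    μ.withDensity f ⟂ₘ μ.withDensity g := by
  refine MutuallySingular.mk (s := (Function.support f)ᶜ) (t := Function.support f) ?_ ?_
    (by rw [Set.compl_union_self])
  · rw [withDensity_apply_eq_zero' hf, Function.support, Set.inter_compl_self, measure_empty]
  · rw [withDensity_apply_eq_zero' hg]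
    exact measure_mono_null hfg.symm.inter_eq.subset measure_empty

lemma tvDist_eq_of_add_of_mutuallySingular {μ ν ρ μ' ν' : Measure γ} [IsFiniteMeasure ρ]
    (hμ : ρ + μ' = μ) (hν : ρ + ν' = ν) (h : μ' ⟂ₘ ν') :
    tvDist μ ν = 2 * (μ' Set.univ ⊔ ν' Set.univ) := by
  have sub_le {σ τ : Measure γ} (A : Set γ) : (ρ + σ) A - (ρ + τ) A ≤ σ A := by
    rw [add_apply, add_apply, tsub_le_iff_right, add_comm (ρ A)]
    gcongr
    exact le_self_add
  have sub_eq {σ τ : Measure γ} {A : Set γ} (hA : τ A = 0) : (ρ + σ) A - (ρ + τ) A = σ A := by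
    rw [add_apply, add_apply, hA, add_zero, ENNReal.add_sub_cancel_left (measure_ne_top ρ A)]
  obtain ⟨T, hT, hμ'T, hν'T⟩ := h
  subst hμ hν
  rw [tvDist]
  congr 1
  refine le_antisymm (iSup₂_le fun A _ => sup_le_sup ?_ ?_) (sup_le ?_ ?_)
  · exact (sub_le A).trans (measure_mono (Set.subset_univ A))
  · exact (sub_le A).trans (measure_mono (Set.subset_univ A))
  · calc μ' Set.univ = μ' Tᶜ := by rw [← measure_add_measure_compl hT, hμ'T, zero_add]
      _ = (ρ + μ') Tᶜ - (ρ + ν') Tᶜ := (sub_eq hν'T).symm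
      _ ≤ _ := le_sup_left.trans (le_iSup₂_of_le Tᶜ hT.compl le_rfl)
  · calc ν' Set.univ = ν' T := by rw [← measure_add_measure_compl hT, hν'T, add_zero]
      _ = (ρ + ν') T - (ρ + μ') T := (sub_eq hμ'T).symm
      _ ≤ _ := le_sup_right.trans (le_iSup₂_of_le T hT le_rfl)

end MeasureTheory.Measure

namespace ProbabilityTheory.Kernel

variable {α γ : Type*} [MeasurableSpace α] [MeasurableSpace γ]

lemma le_of_add_eq {κ₁ κ₂ κ : Kernel α γ} (h : κ₁ + κ₂ = κ) : κ₂ ≤ κ := fun a s => by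
  rw [← h, add_apply, Measure.add_apply]
  exact le_add_self

variable [MeasurableSpace.CountableOrCountablyGenerated α γ] (κ η : Kernel α γ)

section Finite

variable [IsFiniteKernel η]

/-- The pointwise minimum `κ a ⊓ η a` of the two kernels. -/
noncomputable def overlap : Kernel α γ := η.withDensity fun a y => min (κ.rnDeriv η a y) 1

noncomputable def excessRight : Kernel α γ := η.withDensity fun a y => 1 - κ.rnDeriv η a y

lemma overlap_add_excessRight : overlap κ η + excessRight κ η = η := by
  rw [overlap, excessRight, ← withDensity_add_right ((measurable_rnDeriv κ η).min measurable_const)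
    (measurable_const.sub (measurable_rnDeriv κ η))]
  conv_rhs => rw [← withDensity_one η]
  congr
  ext a y
  rw [Pi.add_apply, Pi.add_apply, min_comm, add_comm]
  exact tsub_add_min

instance : IsFiniteKernel (overlap κ η) :=
  isFiniteKernel_of_le (le_of_add_eq ((add_comm _ _).trans (overlap_add_excessRight κ η)))

instance : IsFiniteKernel (excessRight κ η) :=
  isFiniteKernel_of_le (le_of_add_eq (overlap_add_excessRight κ η))

variable [IsFiniteKernel κ]

noncomputable def excessLeft : Kernel α γ :=
  η.withDensity (fun a y => κ.rnDeriv η a y - 1) + κ.singularPart η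

lemma overlap_add_excessLeft : overlap κ η + excessLeft κ η = κ := by
  conv_rhs => rw [← rnDeriv_add_singularPart κ η]
  rw [overlap, excessLeft, ← add_assoc, ← withDensity_add_right
    ((measurable_rnDeriv κ η).min measurable_const) ((measurable_rnDeriv κ η).sub measurable_const)]
  congr
  ext a y
  exact (add_comm _ _).trans tsub_add_min

instance : IsFiniteKernel (excessLeft κ η) :=
  isFiniteKernel_of_le (le_of_add_eq (overlap_add_excessLeft κ η))

lemma mutuallySingular_excessLeft_excessRight (a : α) :
    excessLeft κ η a ⟂ₘ excessRight κ η a := by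
  have hf := measurable_rnDeriv_right κ η a
  rw [excessLeft, excessRight, add_apply,
    Kernel.withDensity_apply _ ((measurable_rnDeriv κ η).sub measurable_const),
    Kernel.withDensity_apply _ (measurable_const.sub (measurable_rnDeriv κ η))]
  refine .add_left (Measure.withDensity_mutuallySingular_of_disjoint_support
    (hf.sub measurable_const).aemeasurable (measurable_const.sub hf).aemeasurable
    (Set.disjoint_left.mpr fun y h₁ h₂ => ?_))
    (mutuallySingular_singularPart κ η a).symm.withDensity.symm
  rcases le_total (κ.rnDeriv η a y) 1 with h | h
  · exact h₁ (tsub_eq_zero_of_le h)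
  · exact h₂ (tsub_eq_zero_of_le h)

lemma tvDist_eq_two_mul (a : α) :
    tvDist (κ a) (η a) = 2 * (excessLeft κ η a Set.univ ⊔ excessRight κ η a Set.univ) :=
  Measure.tvDist_eq_of_add_of_mutuallySingular
    (by rw [← add_apply, overlap_add_excessLeft]) (by rw [← add_apply, overlap_add_excessRight])
    (mutuallySingular_excessLeft_excessRight κ η a)

noncomputable def maximalCoupling : Kernel α (γ × γ) :=
  (overlap κ η).map Function.diag +
    (excessLeft κ η ×ₖ excessRight κ η).withDensity fun a _ => (excessRight κ η a Set.univ)⁻¹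

lemma maximalCoupling_apply (a : α) :
    maximalCoupling κ η a = (overlap κ η a).map Function.diag +
      (excessRight κ η a Set.univ)⁻¹ • (excessLeft κ η a).prod (excessRight κ η a) := by
  have hdens : Measurable (Function.uncurry fun (a : α) (_ : γ × γ) =>
      (excessRight κ η a Set.univ)⁻¹) :=
    ((excessRight κ η).measurable_coe MeasurableSet.univ).inv.comp measurable_fst
  rw [maximalCoupling, add_apply, map_apply _ measurable_diag, Kernel.withDensity_apply _ hdens,
    prod_apply, withDensity_const]

lemma maximalCoupling_restrict_compl_diagonal_absolutelyContinuous
    (hΔ : MeasurableSet {p : γ × γ | p.1 = p.2}) (a : α) :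
    (maximalCoupling κ η a).restrict {p | p.1 = p.2}ᶜ ≪ (κ a).prod (η a) := by
  have hdiag : ((overlap κ η a).map Function.diag).restrict {p | p.1 = p.2}ᶜ = 0 := by
    rw [Measure.restrict_eq_zero, Measure.map_apply measurable_diag hΔ.compl]
    exact measure_mono_null (fun y hy => hy rfl) measure_empty
  rw [maximalCoupling_apply, Measure.restrict_add, hdiag, zero_add]
  exact (Measure.absolutelyContinuous_of_le Measure.restrict_le_self).trans <|
    Measure.smul_absolutelyContinuous.trans <| .prod
      (Measure.absolutelyContinuous_of_le (le_of_add_eq (overlap_add_excessLeft κ η) a))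
      (Measure.absolutelyContinuous_of_le (le_of_add_eq (overlap_add_excessRight κ η) a))

end Finite

section Markov

variable [IsMarkovKernel η]

lemma overlap_apply_univ_add_excessRight (a : α) :
    overlap κ η a Set.univ + excessRight κ η a Set.univ = 1 := by
  rw [← Measure.add_apply, ← add_apply, overlap_add_excessRight, measure_univ]

variable [IsMarkovKernel κ]

lemma excessLeft_apply_univ (a : α) :
    excessLeft κ η a Set.univ = excessRight κ η a Set.univ := by
  refine (ENNReal.add_right_inj (measure_ne_top (overlap κ η a) Set.univ)).mp ?_
  rw [overlap_apply_univ_add_excessRight, ← Measure.add_apply, ← add_apply,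
    overlap_add_excessLeft, measure_univ]

instance : IsMarkovKernel (maximalCoupling κ η) := ⟨fun a => ⟨by
  rw [maximalCoupling_apply, Measure.add_apply, Measure.smul_apply, smul_eq_mul,
    Measure.map_apply measurable_diag .univ, Set.preimage_univ, ← Set.univ_prod_univ,
    Measure.prod_prod, excessLeft_apply_univ,
    ENNReal.inv_mul_cancel_left' id (fun h => absurd h (measure_ne_top _ _)),
    overlap_apply_univ_add_excessRight]⟩⟩

lemma maximalCoupling_apply_diagonal (hΔ : MeasurableSet {p : γ × γ | p.1 = p.2}) (a : α) :
    maximalCoupling κ η a {p | p.1 = p.2} = 1 - 1 / 2 * tvDist (κ a) (η a) := by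
  have hpre : Function.diag ⁻¹' {p : γ × γ | p.1 = p.2} = Set.univ :=
    Set.eq_univ_of_forall fun _ => rfl
  rw [maximalCoupling_apply, Measure.add_apply, Measure.smul_apply, smul_eq_mul,
    (mutuallySingular_excessLeft_excessRight κ η a).prod_diagonal_eq_zero, mul_zero, add_zero,
    Measure.map_apply measurable_diag hΔ, hpre, tvDist_eq_two_mul, excessLeft_apply_univ,
    sup_idem, ← mul_assoc, one_div, ENNReal.inv_mul_cancel two_ne_zero ENNReal.ofNat_ne_top,
    one_mul]
  exact ENNReal.eq_sub_of_add_eq (measure_ne_top _ _) (overlap_apply_univ_add_excessRight κ η a)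

end Markov

end ProbabilityTheory.Kernel

/-- **The Coupling Lemma for transition probabilities (Lemma 1).** For any Markov kernel `P`
on a countably generated measurable space whose diagonal is product-measurable, there is a
Markov kernel `Q` on `E × E` such that for every `(x₁, x₂)`:
(i) `Q((x₁,x₂), Δ) = 1 - (1/2)‖P(x₁,·) - P(x₂,·)‖`, and
(ii) `Q((x₁,x₂), ·)` restricted to the complement of the diagonal is absolutely continuous
with respect to `P(x₁,·) ⊗ P(x₂,·)`. -/
theorem coupling_lemma
    {E : Type*} [MeasurableSpace E] [MeasurableSpace.CountablyGenerated E]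
    (hΔ : MeasurableSet {p : E × E | p.1 = p.2})
    (P : ProbabilityTheory.Kernel E E) [IsMarkovKernel P] :
    ∃ Q : ProbabilityTheory.Kernel (E × E) (E × E), IsMarkovKernel Q ∧
      (∀ x : E × E,
        Q x {p : E × E | p.1 = p.2} = 1 - (1 / 2 : ℝ≥0∞) * tvDist (P x.1) (P x.2)) ∧
      (∀ x : E × E,
        (Q x).restrict {p : E × E | p.1 = p.2}ᶜ ≪ (P x.1).prod (P x.2)) :=
  ⟨Kernel.maximalCoupling (P.prodMkRight E) (P.prodMkLeft E), inferInstance,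
    Kernel.maximalCoupling_apply_diagonal _ _ hΔ,
    Kernel.maximalCoupling_restrict_compl_diagonal_absolutelyContinuous _ _ hΔ⟩
end

section
/- (Recurrence Lemma, everywhere version.) Let X be a Markov chain on E with transition kernel P and n-step transition probabilities P_n(x,·), and let μ be an invariant probability measure. Assume that for every pair x, y ∈ E there exists n with P_n(x,·) and P_n(y,·) mutually absolutely continuous (equivalent). Then for every B ∈ 𝓔 with μ(B) > 0 and for every x ∈ E one has ℙ_x(X_n ∈ B for infinitely many n) = 1. -/
open MeasureTheory ProbabilityTheory Filter ENNReal

/-! The probability `h x = ℙ_x(X_n ∈ B i.o.)` is a bounded harmonic function, `h = P_n h` for every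
`n`, because the event is shift invariant. For the invariant law `μ`,
`∫∫ (h z - h y)² P_n(y, dz) μ(dy) = ∫ P_n(h²) dμ - ∫ h² dμ = 0`, so for `μ`-a.e. `y` the function
`h` equals `h y` almost surely under every `P_n(y, ·)`; since `P_n(x, ·) ≪ P_n(y, ·)` for a suitable
`n`, this reaches every starting point `x`, and `h` is constant. Under `ℙ_μ` the shift preserves
the measure, so by Poincaré recurrence almost every path that starts in `B` visits `B` infinitely
often. As `μ B > 0`, `h = 1` at some point, hence everywhere. -/

namespace ProbabilityTheory.Kernel

variable {E : Type*} [MeasurableSpace E] {μ : Measure E} [IsProbabilityMeasure μ]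

def IsHarmonic (K : Kernel E E) (f : E → ℝ) : Prop := ∀ x, ∫ z, f z ∂K x = f x

lemma IsHarmonic.ae_ae_eq {K : Kernel E E} [IsMarkovKernel K] {f : E → ℝ} (hfK : K.IsHarmonic f)
    (hμ : K ∘ₘ μ = μ) (hf : Measurable f) {C : ℝ} (hC : ∀ x, |f x| ≤ C) :
    ∀ᵐ y ∂μ, ∀ᵐ z ∂K y, f z = f y := by
  set ρ := μ ⊗ₘ K
  have hL2 : ∀ {g : E × E → E}, Measurable g → MemLp (fun p => f (g p)) 2 ρ := fun hg =>
    .of_bound (hf.comp hg).aestronglyMeasurable C (ae_of_all _ fun p => hC _)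
  have h₁ := hL2 measurable_fst
  have h₂ := hL2 measurable_snd
  have hmul : Integrable (fun p => f p.1 * f p.2) ρ := h₁.integrable_mul h₂
  have hfst : ∫ p, f p.1 ^ 2 ∂ρ = ∫ y, f y ^ 2 ∂μ := by
    rw [← Measure.fst_compProd μ K, Measure.fst,
      integral_map measurable_fst.aemeasurable (hf.pow_const 2).aestronglyMeasurable]
  have hsnd : ∫ p, f p.2 ^ 2 ∂ρ = ∫ y, f y ^ 2 ∂μ := by
    conv_rhs => rw [← hμ, ← Measure.snd_compProd, Measure.snd,
      integral_map measurable_snd.aemeasurable (hf.pow_const 2).aestronglyMeasurable]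
  have hmixed : ∫ p, f p.1 * f p.2 ∂ρ = ∫ y, f y ^ 2 ∂μ := by
    rw [Measure.integral_compProd hmul]
    simp_rw [integral_const_mul, show ∀ x, ∫ z, f z ∂K x = f x from hfK, sq]
  have hzero : ∫ p, (f p.2 - f p.1) ^ 2 ∂ρ = 0 := by
    have hexpand : (fun p : E × E => (f p.2 - f p.1) ^ 2)
        = fun p => f p.2 ^ 2 + f p.1 ^ 2 - 2 * (f p.1 * f p.2) := by
      funext p; ring
    have hsq : Integrable (fun p : E × E => f p.2 ^ 2 + f p.1 ^ 2) ρ :=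
      h₂.integrable_sq.add h₁.integrable_sq
    rw [hexpand, integral_sub hsq (hmul.const_mul 2),
      integral_add h₂.integrable_sq h₁.integrable_sq, integral_const_mul, hfst, hsnd, hmixed]
    ring
  have hae := (integral_eq_zero_iff_of_nonneg (fun p => sq_nonneg _)
    (h₂.sub h₁).integrable_sq).1 hzero
  refine (Measure.ae_compProd_iff (measurableSet_eq_fun (hf.comp measurable_snd)
    (hf.comp measurable_fst))).1 ?_
  filter_upwards [hae] with p hp
  simpa [sub_eq_zero] using hp

theorem exists_eq_const_of_isHarmonic (K : ℕ → Kernel E E) [∀ n, IsMarkovKernel (K n)]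
    (hμ : ∀ n, K n ∘ₘ μ = μ) (hK : ∀ x y, ∃ n, K n x ≪ K n y)
    {f : E → ℝ} (hfK : ∀ n, (K n).IsHarmonic f) (hf : Measurable f) {C : ℝ}
    (hC : ∀ x, |f x| ≤ C) :
    ∃ c, ∀ x, f x = c := by
  obtain ⟨y, hy⟩ := (ae_all_iff.2 fun n => (hfK n).ae_ae_eq (hμ n) hf hC).exists
  refine ⟨f y, fun x => ?_⟩
  obtain ⟨n, hxy⟩ := hK x y
  rw [← hfK n x, integral_congr_ae (hxy.ae_le (hy n)), MeasureTheory.integral_const,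
    probReal_univ, one_smul]

end ProbabilityTheory.Kernel

section nStep

variable {E : Type*} [MeasurableSpace E] (P : Kernel E E)

instance isMarkovKernel_nStep [IsMarkovKernel P] (n : ℕ) : IsMarkovKernel (nStep P n) := by
  induction n with
  | zero => exact inferInstanceAs (IsMarkovKernel Kernel.id)
  | succ n ih => exact inferInstanceAs (IsMarkovKernel (nStep P n ∘ₖ P))

lemma nStep_comp_eq_self {μ : Measure E} (hμ : P ∘ₘ μ = μ) (n : ℕ) : nStep P n ∘ₘ μ = μ := by
  induction n with
  | zero => exact Measure.id_comp
  | succ n ih => rw [nStep, ← Measure.comp_assoc, hμ, ih]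

end nStep

namespace MarkovChain

section Shift

variable {E : Type*}

def shift (ω : ℕ → E) : ℕ → E := fun k => ω (k + 1)

lemma shift_iterate_apply (n : ℕ) (ω : ℕ → E) (k : ℕ) : shift^[n] ω k = ω (k + n) := by
  induction n generalizing ω with
  | zero => rfl
  | succ n ih => rw [Function.iterate_succ_apply, ih]; rfl

def visitsInfOften (B : Set E) : Set (ℕ → E) := {ω | ∃ᶠ n in atTop, ω n ∈ B}

lemma shift_preimage_visitsInfOften (B : Set E) :
    shift ⁻¹' visitsInfOften B = visitsInfOften B := by
  ext ω
  refine (frequently_map (m := (· + 1)) (P := fun n => ω n ∈ B)).symm.trans ?_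
  rw [map_add_atTop_eq_nat]
  rfl

variable [MeasurableSpace E]

lemma measurable_shift : Measurable (shift (E := E)) :=
  measurable_pi_lambda _ fun k => measurable_pi_apply (k + 1)

lemma measurableSet_visitsInfOften {B : Set E} (hB : MeasurableSet B) :
    MeasurableSet (visitsInfOften B) := by
  have h : visitsInfOften B = ⋂ N, ⋃ n ≥ N, (fun ω : ℕ → E => ω n) ⁻¹' B := by
    ext ω; simp [visitsInfOften, frequently_atTop]
  rw [h]
  exact .iInter fun N => .biUnion (Set.to_countable _) fun n _ => measurable_pi_apply n hB

end Shift

variable {E : Type*} [MeasurableSpace E] {P : Kernel E E} {ν : Kernel E (ℕ → E)}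

lemma map_shift_iterate (hν : ν.map shift = ν ∘ₖ P) (n : ℕ) :
    ν.map shift^[n] = ν ∘ₖ nStep P n := by
  induction n with
  | zero => simp [nStep]
  | succ n ih =>
    rw [Function.iterate_succ, Kernel.map_comp_right _ measurable_shift
      (measurable_shift.iterate n), hν, Kernel.map_comp, ih, Kernel.comp_assoc]
    rfl

lemma measure_preimage_shift_iterate (hν : ν.map shift = ν ∘ₖ P) (n : ℕ) (x : E)
    {S : Set (ℕ → E)} (hS : MeasurableSet S) :
    ν x (shift^[n] ⁻¹' S) = ∫⁻ z, ν z S ∂nStep P n x := by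
  rw [← Kernel.map_apply' _ (measurable_shift.iterate n) _ hS, map_shift_iterate hν,
    Kernel.comp_apply' _ _ _ hS]

lemma measurePreserving_shift {μ : Measure E} (hμ : P ∘ₘ μ = μ) (hν : ν.map shift = ν ∘ₖ P) :
    MeasurePreserving shift (ν ∘ₘ μ) (ν ∘ₘ μ) :=
  ⟨measurable_shift, by rw [Measure.map_comp _ _ measurable_shift, hν, ← Measure.comp_assoc, hμ]⟩

variable [IsMarkovKernel ν] {μ : Measure E} [IsProbabilityMeasure μ]

lemma measure_eval_zero_mem_inter (hν₀ : ∀ x, (ν x).map (fun ω => ω 0) = Measure.dirac x)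
    {A : Set E} (hA : MeasurableSet A) (D : Set (ℕ → E)) (x : E) :
    ν x ({ω | ω 0 ∈ A} ∩ D) = A.indicator (fun y => ν y D) x := by
  have hA₀ : MeasurableSet {ω : ℕ → E | ω 0 ∈ A} := measurable_pi_apply 0 hA
  have h : ν x {ω | ω 0 ∈ A} = A.indicator 1 x := by
    rw [← Measure.dirac_apply' x hA, ← hν₀ x, Measure.map_apply (measurable_pi_apply 0) hA]
    rfl
  by_cases hx : x ∈ A
  · rw [Set.indicator_of_mem hx, Set.inter_comm,
      measure_inter_conull ((prob_compl_eq_zero_iff hA₀).2 (by simpa [hx] using h))]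
  · rw [Set.indicator_of_notMem hx]
    exact measure_mono_null Set.inter_subset_left (by simpa [hx] using h)

lemma ae_restrict_measure_visitsInfOften_eq_one (hμ : P ∘ₘ μ = μ) (hν : ν.map shift = ν ∘ₖ P)
    (hν₀ : ∀ x, (ν x).map (fun ω => ω 0) = Measure.dirac x) {B : Set E} (hB : MeasurableSet B) :
    ∀ᵐ y ∂μ.restrict B, ν y (visitsInfOften B) = 1 := by
  have hB₀ : MeasurableSet {ω : ℕ → E | ω 0 ∈ B} := measurable_pi_apply 0 hB
  have hV := measurableSet_visitsInfOften hB
  have hrec := (measurePreserving_shift hμ hν).conservative.ae_mem_imp_frequently_image_mem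
    hB₀.nullMeasurableSet
  have hnull : (ν ∘ₘ μ) ({ω | ω 0 ∈ B} ∩ (visitsInfOften B)ᶜ) = 0 := by
    refine measure_eq_zero_iff_ae_notMem.2 (hrec.mono fun ω hω ⟨h₀, hnot⟩ => hnot ?_)
    simpa [visitsInfOften, shift_iterate_apply] using hω h₀
  rw [Measure.bind_apply (hB₀.inter hV.compl) ν.aemeasurable] at hnull
  simp_rw [measure_eval_zero_mem_inter hν₀ hB] at hnull
  rw [lintegral_indicator hB, lintegral_eq_zero_iff (ν.measurable_coe hV.compl)] at hnull
  exact hnull.mono fun y hy => (prob_compl_eq_zero_iff hV).1 hy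

lemma measure_eq_of_shift_preimage_eq [IsMarkovKernel P] (hμ : P ∘ₘ μ = μ)
    (hP : ∀ x y, ∃ n, nStep P n x ≪ nStep P n y) (hν : ν.map shift = ν ∘ₖ P)
    {S : Set (ℕ → E)} (hS : MeasurableSet S) (hSshift : shift ⁻¹' S = S) (x y : E) :
    ν x S = ν y S := by
  have hharm (n : ℕ) : (nStep P n).IsHarmonic fun z => (ν z).real S := fun x => by
    have hSn : shift^[n] ⁻¹' S = S := by
      rw [Set.preimage_iterate_eq]; exact Function.iterate_fixed hSshift n
    simp only [Measure.real]
    rw [integral_toReal (ν.measurable_coe hS).aemeasurable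
        (ae_of_all _ fun _ => measure_lt_top _ _),
      ← measure_preimage_shift_iterate hν n x hS, hSn]
  have hbdd (z : E) : |(ν z).real S| ≤ 1 := by
    rw [abs_of_nonneg measureReal_nonneg]; exact measureReal_le_one
  obtain ⟨c, hc⟩ := Kernel.exists_eq_const_of_isHarmonic (nStep P) (nStep_comp_eq_self P hμ) hP
    hharm (ν.measurable_coe hS).ennreal_toReal hbdd
  exact (toReal_eq_toReal_iff' (measure_ne_top _ _) (measure_ne_top _ _)).1
    ((hc x).trans (hc y).symm)

end MarkovChain

theorem recurrence_lemma_everywhere_general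
    {E : Type*} [MeasurableSpace E]
    (P : ProbabilityTheory.Kernel E E) [IsMarkovKernel P]
    (μ : Measure E) [IsProbabilityMeasure μ]
    (hinv : ∀ A : Set E, MeasurableSet A → μ A = ∫⁻ x, P x A ∂μ)
    (hreg : ∀ x y : E, ∃ n : ℕ,
      nStep P n x ≪ nStep P n y ∧ nStep P n y ≪ nStep P n x)
    (ν : ProbabilityTheory.Kernel E (ℕ → E)) [IsMarkovKernel ν]
    (hν0 : ∀ x : E, (ν x).map (fun ω => ω 0) = Measure.dirac x)
    (hνM : ∀ x : E, (ν x).map (fun ω k => ω (k + 1)) = (P x).bind (fun y => ν y))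
    (B : Set E) (hB : MeasurableSet B) (hBpos : 0 < μ B) :
    ∀ x : E, ν x {ω : ℕ → E | ∀ N : ℕ, ∃ n ≥ N, ω n ∈ B} = 1 := by
  have hμ : P ∘ₘ μ = μ := Measure.ext fun A hA => by
    rw [Measure.bind_apply hA P.aemeasurable, hinv A hA]
  have hν : ν.map MarkovChain.shift = ν ∘ₖ P := Kernel.ext fun x => by
    rw [Kernel.map_apply _ MarkovChain.measurable_shift, Kernel.comp_apply]
    exact hνM x
  have hconst := MarkovChain.measure_eq_of_shift_preimage_eq hμ
    (fun x y => (hreg x y).imp fun _ => And.left) hν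
    (MarkovChain.measurableSet_visitsInfOften hB) (MarkovChain.shift_preimage_visitsInfOften B)
  have : (ae (μ.restrict B)).NeBot := ae_restrict_neBot.2 hBpos.ne'
  obtain ⟨y, hy⟩ := (MarkovChain.ae_restrict_measure_visitsInfOften_eq_one hμ hν hν0 hB).exists
  intro x
  simpa only [MarkovChain.visitsInfOften, frequently_atTop] using (hconst x y).trans hy

/-- **The Recurrence Lemma (Lemma 2), everywhere version.** Here `ν x = ℙ_x` is the law on
path space of the Markov chain with transition kernel `P` started at `x`. If `μ` is
invariant and for every pair `x, y` some `P_n(x,·) ∼ P_n(y,·)`, then every set `B` with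
`μ(B) > 0` is visited infinitely often `ℙ_x`-a.s., for every `x`. -/
theorem recurrence_lemma_everywhere
    {E : Type*} [MeasurableSpace E] [MeasurableSpace.CountablyGenerated E]
    (hΔ : MeasurableSet {p : E × E | p.1 = p.2})
    (P : ProbabilityTheory.Kernel E E) [IsMarkovKernel P]
    (μ : Measure E) [IsProbabilityMeasure μ]
    (hinv : ∀ A : Set E, MeasurableSet A → μ A = ∫⁻ x, P x A ∂μ)
    (hreg : ∀ x y : E, ∃ n : ℕ,
      nStep P n x ≪ nStep P n y ∧ nStep P n y ≪ nStep P n x)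
    (ν : ProbabilityTheory.Kernel E (ℕ → E)) [IsMarkovKernel ν]
    (hν0 : ∀ x : E, (ν x).map (fun ω => ω 0) = Measure.dirac x)
    (hνM : ∀ x : E, (ν x).map (fun ω k => ω (k + 1)) = (P x).bind (fun y => ν y))
    (B : Set E) (hB : MeasurableSet B) (hBpos : 0 < μ B) :
    ∀ x : E, ν x {ω : ℕ → E | ∀ N : ℕ, ∃ n ≥ N, ω n ∈ B} = 1 :=
  recurrence_lemma_everywhere_general P μ hinv hreg ν hν0 hνM B hB hBpos
end
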